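/- For every integer d ≥ 3, the integral R^hydro_d satisfies R^hydro_d ≤ 4/d. -/

import Mathlib

/-!
With `a(t) = 2 - 2 cos (2πt) = 4 sin² (πt)` the denominator is `∑ᵢ a(xᵢ)`. Every coordinate lies in
exactly three of the `d` cyclic windows `{i, i+1, i+2}`, so AM–HM gives
`(∑ᵢ a(xᵢ))⁻¹ ≤ 3/d² · ∑ᵢ (a(xᵢ) + a(xᵢ₊₁) + a(xᵢ₊₂))⁻¹`. Under the product measure every
window term has the same integral as in dimension three, and there Jordan's inequality
`a(t) ≥ 16 min(t, 1-t)²` and the layer-cake formula bound it by `3/4`.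
The integral is therefore at most `9/(4d) ≤ 4/d`.
-/

open Real MeasureTheory Set Function
open scoped ENNReal NNReal

theorem ENNReal.card_sq_mul_inv_sum_le_sum_inv {ι : Type*} [Fintype ι] (b : ι → ℝ≥0∞) :
    (Fintype.card ι : ℝ≥0∞) ^ 2 * (∑ i, b i)⁻¹ ≤ ∑ i, (b i)⁻¹ := by
  by_cases hzero : ∃ i, b i = 0
  · obtain ⟨i, hbi⟩ := hzero
    exact le_top.trans_eq (ENNReal.sum_eq_top.2 ⟨i, Finset.mem_univ _, by simp [hbi]⟩).symm
  by_cases htop : ∃ i, b i = ⊤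
  · obtain ⟨i, hbi⟩ := htop
    simp [ENNReal.sum_eq_top.2 ⟨i, Finset.mem_univ _, hbi⟩]
  rcases isEmpty_or_nonempty ι with hι | hι
  · simp
  push Not at hzero htop
  lift b to ι → ℝ≥0 using htop
  have hpos : ∀ i ∈ Finset.univ, 0 < b i := fun i _ => by
    simpa [pos_iff_ne_zero] using hzero i
  have key := Finset.sq_sum_div_le_sum_sq_div Finset.univ (fun _ => (1 : ℝ≥0)) hpos
  simp only [Finset.sum_const, Finset.card_univ, nsmul_eq_mul, mul_one, one_pow, one_div] at key
  rw [← ENNReal.ofNNReal_finsetSum,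
    ← ENNReal.coe_inv (Finset.sum_pos hpos Finset.univ_nonempty).ne',
    Finset.sum_congr rfl fun i hi => (ENNReal.coe_inv (hpos i hi).ne').symm]
  exact_mod_cast key

section Windows

variable {G κ : Type*} [AddGroup G] [Fintype G] [Fintype κ]

theorem sum_sum_add_eq_card_smul_sum {M : Type*} [AddCommMonoid M] (a : G → M) (g : κ → G) :
    ∑ i, ∑ j, a (i + g j) = Fintype.card κ • ∑ i, a i := by
  rw [Finset.sum_comm]
  exact (Finset.sum_congr rfl fun j _ => Equiv.sum_comp (Equiv.addRight (g j)) a).trans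
    (by rw [Finset.sum_const, Finset.card_univ])

theorem ENNReal.inv_sum_le_mul_sum_inv_window_sum [Nonempty κ] (a : G → ℝ≥0∞) (g : κ → G) :
    (∑ i, a i)⁻¹ ≤
      Fintype.card κ / Fintype.card G ^ 2 * ∑ i, (∑ j, a (i + g j))⁻¹ := by
  set k : ℝ≥0∞ := (Fintype.card κ : ℝ≥0∞)
  set n : ℝ≥0∞ := (Fintype.card G : ℝ≥0∞)
  have hk0 : k ≠ 0 := by simp [k, Fintype.card_ne_zero]
  have hn0 : n ^ 2 ≠ 0 := by simp [n, Fintype.card_ne_zero]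
  have hk : k ≠ ⊤ := ENNReal.natCast_ne_top _
  have hn : n ^ 2 ≠ ⊤ := ENNReal.pow_ne_top (ENNReal.natCast_ne_top _)
  calc (∑ i, a i)⁻¹ = k * (k * ∑ i, a i)⁻¹ := by
        rw [ENNReal.mul_inv (.inl hk0) (.inl hk), ← mul_assoc, ENNReal.mul_inv_cancel hk0 hk,
          one_mul]
    _ = k / n ^ 2 * (n ^ 2 * (∑ i, ∑ j, a (i + g j))⁻¹) := by
        rw [sum_sum_add_eq_card_smul_sum, nsmul_eq_mul, div_eq_mul_inv, mul_assoc,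
          ← mul_assoc (n ^ 2)⁻¹, ENNReal.inv_mul_cancel hn0 hn, one_mul]
    _ ≤ k / n ^ 2 * ∑ i, (∑ j, a (i + g j))⁻¹ := by
        gcongr
        exact ENNReal.card_sq_mul_inv_sum_le_sum_inv _

end Windows

theorem MeasureTheory.measurePreserving_comp_right_of_injective {ι κ α : Type*} [Fintype ι]
    [Fintype κ] [MeasurableSpace α] (μ : Measure α) [IsProbabilityMeasure μ] {g : ι → κ}
    (hg : Injective g) :
    MeasurePreserving (· ∘ g) (Measure.pi fun _ : κ => μ) (Measure.pi fun _ : ι => μ) := by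
  classical
  have hmeas : Measurable fun x : κ → α => x ∘ g :=
    measurable_pi_lambda _ fun j => measurable_pi_apply _
  refine ⟨hmeas, (Measure.pi_eq fun s hs => ?_).symm⟩
  have hpre : (· ∘ g) ⁻¹' univ.pi s = univ.pi fun k => ⋂ (j) (_ : g j = k), s j := by
    ext x; simp only [mem_preimage, mem_univ_pi, comp_apply, mem_iInter]
    exact ⟨fun h _ j hj => hj ▸ h j, fun h j => h _ j rfl⟩
  rw [Measure.map_apply hmeas (.univ_pi hs), hpre, Measure.pi_pi]
  refine (Fintype.prod_of_injective g hg _ _ (fun k hk => ?_) fun j => ?_).symm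
  · have : (⋂ (j) (_ : g j = k), s j) = univ := by
      simp only [iInter_eq_univ]; exact fun j hj => absurd ⟨j, hj⟩ hk
    simp [this]
  · simp [hg.eq_iff]

theorem MeasureTheory.lintegral_inv_sum_le_card_div_mul_lintegral_inv_sum {G κ α : Type*}
    [AddGroup G] [Fintype G] [Fintype κ] [Nonempty κ] [MeasurableSpace α]
    (μ : Measure α) [IsProbabilityMeasure μ] {φ : α → ℝ≥0∞} (hφ : Measurable φ) {g : κ → G}
    (hg : Injective g) :
    ∫⁻ x, (∑ i, φ (x i))⁻¹ ∂(Measure.pi fun _ : G => μ) ≤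
      Fintype.card κ / Fintype.card G *
        ∫⁻ y, (∑ j, φ (y j))⁻¹ ∂(Measure.pi fun _ : κ => μ) := by
  set F : (κ → α) → ℝ≥0∞ := fun y => (∑ j, φ (y j))⁻¹
  have hF : Measurable F := by fun_prop
  have hwindow : ∀ i : G, ∫⁻ x, F (x ∘ (i + g ·)) ∂(Measure.pi fun _ : G => μ) =
      ∫⁻ y, F y ∂(Measure.pi fun _ : κ => μ) := fun i =>
    (measurePreserving_comp_right_of_injective μ ((add_right_injective i).comp hg)).lintegral_comp
      hF
  calc ∫⁻ x, (∑ i, φ (x i))⁻¹ ∂(Measure.pi fun _ : G => μ)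
      ≤ ∫⁻ x, Fintype.card κ / Fintype.card G ^ 2 * ∑ i, F (x ∘ (i + g ·))
          ∂(Measure.pi fun _ : G => μ) :=
        lintegral_mono fun x => ENNReal.inv_sum_le_mul_sum_inv_window_sum (φ ∘ x) g
    _ = Fintype.card κ / Fintype.card G ^ 2 *
          (Fintype.card G * ∫⁻ y, F y ∂(Measure.pi fun _ : κ => μ)) := by
        rw [lintegral_const_mul _ (by fun_prop), lintegral_finsetSum _ fun i _ => by fun_prop]
        simp [hwindow]
    _ = Fintype.card κ / Fintype.card G * ∫⁻ y, F y ∂(Measure.pi fun _ : κ => μ) := by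
        have hn0 : (Fintype.card G : ℝ≥0∞) ≠ 0 := by simp [Fintype.card_ne_zero]
        have hn : (Fintype.card G : ℝ≥0∞) ≠ ⊤ := ENNReal.natCast_ne_top _
        simp only [div_eq_mul_inv, pow_two, ENNReal.mul_inv (.inl hn0) (.inl hn), mul_assoc,
          ENNReal.inv_mul_cancel_left hn0 hn]

noncomputable def dispersion (t : ℝ) : ℝ := 2 - 2 * cos (2 * π * t)

theorem dispersion_nonneg (t : ℝ) : 0 ≤ dispersion t := by
  unfold dispersion; linarith [cos_le_one (2 * π * t)]

@[fun_prop]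
theorem continuous_dispersion : Continuous dispersion := by
  unfold dispersion; fun_prop

theorem dispersion_eq_four_mul_sin_sq (t : ℝ) : dispersion t = 4 * sin (π * t) ^ 2 := by
  rw [dispersion, mul_assoc, cos_two_mul, sin_sq]; ring

theorem sum_dispersion (d : ℕ) (x : Fin d → ℝ) :
    ∑ i, dispersion (x i) = 2 * d - 2 * ∑ i, cos (2 * π * x i) := by
  simp [dispersion, Finset.sum_sub_distrib, Finset.mul_sum, mul_comm]

theorem sq_min_le_dispersion {t : ℝ} (ht : t ∈ Icc (0 : ℝ) 1) :
    16 * min t (1 - t) ^ 2 ≤ dispersion t := by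
  have jordan : ∀ u ∈ Icc (0 : ℝ) (1 / 2), 2 * u ≤ sin (π * u) := fun u ⟨hu0, hu1⟩ => by
    have := mul_le_sin (x := π * u) (by positivity) (by nlinarith [pi_pos])
    rwa [div_mul_eq_mul_div, mul_div_assoc, mul_div_cancel_left₀ _ pi_ne_zero] at this
  have hsin : 2 * min t (1 - t) ≤ sin (π * t) := by
    rcases le_total t (1 / 2) with h | h
    · rw [min_eq_left (by linarith)]
      exact jordan t ⟨ht.1, h⟩
    · rw [min_eq_right (by linarith), ← sin_pi_sub, ← mul_one_sub]
      exact jordan (1 - t) ⟨by linarith [ht.2], by linarith⟩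
  have hmin : 0 ≤ min t (1 - t) := le_min ht.1 (by linarith [ht.2])
  rw [dispersion_eq_four_mul_sin_sq]
  nlinarith

local notation "𝒰" => volume.restrict (Icc (0 : ℝ) 1)

instance : IsProbabilityMeasure 𝒰 := ⟨by simp⟩

theorem volume_restrict_Icc_setOf_min_lt_le {s : ℝ} (hs : 0 ≤ s) :
    𝒰 {u | min u (1 - u) < s} ≤ ENNReal.ofReal (2 * s) := by
  rw [Measure.restrict_apply' measurableSet_Icc]
  have hsub : {u : ℝ | min u (1 - u) < s} ∩ Icc 0 1 ⊆ Icc 0 s ∪ Icc (1 - s) 1 := by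
    rintro u ⟨hu, hu0, hu1⟩
    rcases min_lt_iff.1 (show min u (1 - u) < s from hu) with h | h
    · exact .inl ⟨hu0, h.le⟩
    · exact .inr ⟨by linarith, hu1⟩
  calc volume ({u : ℝ | min u (1 - u) < s} ∩ Icc 0 1)
      ≤ volume (Icc 0 s ∪ Icc (1 - s) 1) := measure_mono hsub
    _ ≤ volume (Icc 0 s) + volume (Icc (1 - s) 1) := measure_union_le _ _
    _ = ENNReal.ofReal (2 * s) := by
        rw [Real.volume_Icc, Real.volume_Icc, ← ENNReal.ofReal_add (by linarith) (by linarith)]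
        ring_nf

theorem measure_setOf_lt_inv_sum_sq_min_le {ι : Type*} [Fintype ι] {t : ℝ} (ht : 0 < t) :
    Measure.pi (fun _ : ι => 𝒰) {y | t < (16 * ∑ j, min (y j) (1 - y j) ^ 2)⁻¹} ≤
      ENNReal.ofReal (2 * √t)⁻¹ ^ Fintype.card ι := by
  set s := (4 * √t)⁻¹
  have hs : 0 < s := by positivity
  have hs2 : s ^ 2 = (16 * t)⁻¹ := by
    rw [inv_pow, mul_pow, sq_sqrt ht.le]; norm_num
  have hsub : {y : ι → ℝ | t < (16 * ∑ j, min (y j) (1 - y j) ^ 2)⁻¹} ⊆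
      univ.pi fun _ => {u | min u (1 - u) < s} := by
    intro y hy j _
    have hS : 0 < 16 * ∑ j, min (y j) (1 - y j) ^ 2 := by
      by_contra! h
      linarith [(inv_nonpos.2 h).trans_lt' hy]
    have hlt : 16 * ∑ j, min (y j) (1 - y j) ^ 2 < t⁻¹ := (lt_inv_comm₀ ht hS).1 hy
    have hterm := Finset.single_le_sum (f := fun j => min (y j) (1 - y j) ^ 2)
      (fun j _ => sq_nonneg _) (Finset.mem_univ j)
    refine lt_of_pow_lt_pow_left₀ 2 hs.le ?_
    rw [hs2, mul_inv]
    linarith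
  calc _ ≤ Measure.pi (fun _ : ι => 𝒰) (univ.pi fun _ => {u | min u (1 - u) < s}) :=
        measure_mono hsub
    _ ≤ ENNReal.ofReal (2 * s) ^ Fintype.card ι := by
        rw [Measure.pi_pi, Finset.prod_const, Finset.card_univ]
        gcongr
        exact volume_restrict_Icc_setOf_min_lt_le hs.le
    _ = ENNReal.ofReal (2 * √t)⁻¹ ^ Fintype.card ι := by
        congr 2; simp only [s, mul_inv]; ring

theorem lintegral_Ioi_ofReal_inv_two_mul_sqrt_pow_three :
    ∫⁻ t in Ioi (1 / 4 : ℝ), ENNReal.ofReal (2 * √t)⁻¹ ^ 3 = ENNReal.ofReal (1 / 2) := by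
  have hrpow : ∀ t ∈ Ioi (1 / 4 : ℝ),
      ENNReal.ofReal (2 * √t)⁻¹ ^ 3 = ENNReal.ofReal (t ^ (-3 / 2 : ℝ) / 8) := by
    intro t ht
    have ht0 : 0 < t := lt_trans (by norm_num) ht
    rw [← ENNReal.ofReal_pow (by positivity), sqrt_eq_rpow, inv_pow, mul_pow,
      ← rpow_natCast (t ^ _), ← rpow_mul ht0.le, show (-3 / 2 : ℝ) = -(1 / 2 * (3 : ℕ)) by norm_num,
      rpow_neg ht0.le]
    ring_nf
  have hint : IntegrableOn (fun t : ℝ => t ^ (-3 / 2 : ℝ) / 8) (Ioi (1 / 4)) :=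
    (integrableOn_Ioi_rpow_of_lt (by norm_num) (by norm_num)).div_const _
  rw [setLIntegral_congr_fun measurableSet_Ioi hrpow, ← ofReal_integral_eq_lintegral_ofReal hint
    (ae_restrict_of_forall_mem measurableSet_Ioi fun t ht =>
      div_nonneg (rpow_nonneg (lt_trans (by norm_num) ht).le _) (by norm_num)),
    integral_div, integral_Ioi_rpow_of_lt (by norm_num) (by norm_num)]
  norm_num [show (-3 / 2 + 1 : ℝ) = -(1 / 2) by norm_num, rpow_neg, ← sqrt_eq_rpow]

theorem lintegral_ofReal_inv_sum_sq_min_le :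
    ∫⁻ y : Fin 3 → ℝ, ENNReal.ofReal (16 * ∑ j, min (y j) (1 - y j) ^ 2)⁻¹
      ∂Measure.pi (fun _ => 𝒰) ≤ ENNReal.ofReal (3 / 4) := by
  set h : (Fin 3 → ℝ) → ℝ := fun y => (16 * ∑ j, min (y j) (1 - y j) ^ 2)⁻¹
  have hh : Measurable h := by fun_prop
  rw [lintegral_eq_lintegral_meas_lt _ (ae_of_all _ fun y => by positivity) hh.aemeasurable,
    ← Ioc_union_Ioi_eq_Ioi (by norm_num : (0 : ℝ) ≤ 1 / 4),
    lintegral_union measurableSet_Ioi (Ioc_disjoint_Ioi le_rfl)]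
  calc _ ≤ (∫⁻ _ in Ioc (0 : ℝ) (1 / 4), 1) +
        ∫⁻ t in Ioi (1 / 4 : ℝ), ENNReal.ofReal (2 * √t)⁻¹ ^ 3 := by
        refine add_le_add (lintegral_mono fun _ => prob_le_one) (setLIntegral_mono (by fun_prop)
          fun t ht => ?_)
        simpa only [Fintype.card_fin] using
          measure_setOf_lt_inv_sum_sq_min_le (ι := Fin 3) (lt_trans (by norm_num) ht)
    _ = ENNReal.ofReal (3 / 4) := by
        rw [setLIntegral_one, Real.volume_Ioc, lintegral_Ioi_ofReal_inv_two_mul_sqrt_pow_three,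
          ← ENNReal.ofReal_add] <;> norm_num

theorem lintegral_inv_sum_dispersion_fin_three_le :
    ∫⁻ y : Fin 3 → ℝ, (∑ j, ENNReal.ofReal (dispersion (y j)))⁻¹ ∂Measure.pi (fun _ => 𝒰) ≤
      ENNReal.ofReal (3 / 4) := by
  refine (lintegral_mono_ae ?_).trans lintegral_ofReal_inv_sum_sq_min_le
  have hcube : ∀ᵐ y ∂Measure.pi (fun _ : Fin 3 => 𝒰), ∀ j, y j ∈ Icc (0 : ℝ) 1 :=
    ae_all_iff.2 fun _ => Measure.tendsto_eval_ae_ae.eventually (ae_restrict_mem measurableSet_Icc)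
  filter_upwards [hcube, Measure.ae_eval_ne _ 0 0, Measure.ae_eval_ne _ 0 1] with y hy h0 h1
  have hmin : 0 < min (y 0) (1 - y 0) :=
    lt_min ((hy 0).1.lt_of_ne' h0) (sub_pos.2 ((hy 0).2.lt_of_ne h1))
  have hpos : 0 < 16 * ∑ j, min (y j) (1 - y j) ^ 2 :=
    mul_pos (by norm_num)
      (Finset.sum_pos' (fun _ _ => sq_nonneg _) ⟨0, Finset.mem_univ _, by positivity⟩)
  rw [ENNReal.ofReal_inv_of_pos hpos]
  gcongr
  rw [Finset.mul_sum, ENNReal.ofReal_sum_of_nonneg fun j _ => by positivity]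
  exact Finset.sum_le_sum fun j _ => ENNReal.ofReal_le_ofReal (sq_min_le_dispersion (hy j))

theorem hydro_upper_bound (d : ℕ) (hd : 3 ≤ d) :
    (∫ x in (Set.univ.pi fun _ : Fin d => Set.Icc (0 : ℝ) 1),
        (2 * d - 2 * ∑ i, Real.cos (2 * π * x i))⁻¹) ≤ 4 / d := by
  have : NeZero d := ⟨by omega⟩
  have hcube : volume.restrict (univ.pi fun _ : Fin d => Icc (0 : ℝ) 1) =
      Measure.pi fun _ => 𝒰 := by
    rw [volume_pi, Measure.restrict_pi_pi]
  have hlint : ∫⁻ x, (∑ i : Fin d, ENNReal.ofReal (dispersion (x i)))⁻¹ ∂Measure.pi (fun _ => 𝒰) ≤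
      3 / d * ENNReal.ofReal (3 / 4) := by
    simpa using (lintegral_inv_sum_le_card_div_mul_lintegral_inv_sum 𝒰
      (φ := fun t => ENNReal.ofReal (dispersion t)) (by fun_prop)
      (Fin.castLE_injective hd)).trans
      (mul_le_mul_right lintegral_inv_sum_dispersion_fin_three_le _)
  simp_rw [← sum_dispersion, hcube]
  have hnonneg : ∀ x : Fin d → ℝ, 0 ≤ (∑ i, dispersion (x i))⁻¹ := fun x =>
    inv_nonneg.2 (Finset.sum_nonneg fun i _ => dispersion_nonneg _)
  rw [integral_eq_lintegral_of_nonneg_ae (ae_of_all _ hnonneg)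
    (Measurable.aestronglyMeasurable (by fun_prop))]
  calc _ ≤ (3 / d * ENNReal.ofReal (3 / 4)).toReal := by
        refine ENNReal.toReal_mono (by finiteness) ((lintegral_mono fun x => ?_).trans hlint)
        rw [← ENNReal.ofReal_sum_of_nonneg fun i _ => dispersion_nonneg _]
        exact ENNReal.ofReal_inv_le
    _ ≤ 4 / d := by
        rw [ENNReal.toReal_mul, ENNReal.toReal_div, ENNReal.toReal_ofReal (by norm_num),
          ENNReal.toReal_natCast, ENNReal.toReal_ofNat, div_mul_eq_mul_div]
        gcongr
        norm_num
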